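/- arXiv:2411.14285 — 4 statements merged into one kernel-verified Lean document; each statement's English description precedes it below -/
import Mathlib

section
/- Let P be a probability measure on ℝ, m ∈ ℝ, and suppose λ_m minimizes λ ↦ E_P[e^{λ(X−m)}] over ℝ with λ_m and 0 in the interior of the set where the MGF is finite. Then the exponential tilt Q_{λ_m} satisfies ∫x dQ_{λ_m}(x) = m and minimizes KL(Q ∥ P) over all probability measures Q on ℝ with ∫x dQ(x) = m. -/
open MeasureTheory Real Classical

/-- Kullback–Leibler divergence, valued in the extended reals. -/
noncomputable def KL (Q P : Measure ℝ) : EReal :=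
  if Q ≪ P ∧ Integrable (fun x => Real.log (Q.rnDeriv P x).toReal) Q
  then ((∫ x, Real.log (Q.rnDeriv P x).toReal ∂Q : ℝ) : EReal)
  else ⊤

lemma exp_between {a b c u : ℝ} (hac : a ≤ c) (hcb : c ≤ b) :
    Real.exp (c * u) ≤ Real.exp (a * u) + Real.exp (b * u) := by
  rcases le_or_gt 0 u with h | h
  · have : c * u ≤ b * u := mul_le_mul_of_nonneg_right hcb h
    calc Real.exp (c * u) ≤ Real.exp (b * u) := Real.exp_le_exp.2 this
    _ ≤ _ := le_add_of_nonneg_left (Real.exp_pos _).le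
  · have : c * u ≤ a * u := mul_le_mul_of_nonpos_right hac h.le
    calc Real.exp (c * u) ≤ Real.exp (a * u) := Real.exp_le_exp.2 this
    _ ≤ _ := le_add_of_nonneg_right (Real.exp_pos _).le

lemma integrable_exp_between {P : Measure ℝ} {a b c : ℝ}
    (ha : Integrable (fun x => Real.exp (a * x)) P)
    (hb : Integrable (fun x => Real.exp (b * x)) P)
    (hac : a ≤ c) (hcb : c ≤ b) : Integrable (fun x => Real.exp (c * x)) P := by
  refine (ha.add hb).mono ?_ ?_
  · exact (Real.continuous_exp.comp (continuous_const.mul continuous_id)).aestronglyMeasurable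
  · refine Filter.Eventually.of_forall fun x => ?_
    simp only [Pi.add_apply]
    rw [Real.norm_eq_abs, Real.norm_eq_abs, abs_of_nonneg (Real.exp_pos _).le,
      abs_of_nonneg (add_nonneg (Real.exp_pos _).le (Real.exp_pos _).le)]
    exact exp_between hac hcb

/-- Nonnegativity of relative entropy. -/
lemma kl_integral_nonneg {Q R : Measure ℝ} [IsProbabilityMeasure Q] [IsProbabilityMeasure R]
    (hQR : Q ≪ R) (hint : Integrable (fun x => Real.log (Q.rnDeriv R x).toReal) Q) :
    0 ≤ ∫ x, Real.log (Q.rnDeriv R x).toReal ∂Q := by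
  set g : ℝ → ℝ := fun x => ((Q.rnDeriv R x).toReal)⁻¹ with hg
  have hpos : ∀ᵐ x ∂Q, 0 < Q.rnDeriv R x := Measure.rnDeriv_pos hQR
  have hlt : ∀ᵐ x ∂Q, Q.rnDeriv R x < ⊤ := (Measure.rnDeriv_lt_top Q R).filter_mono hQR.ae_le
  have hgnn : ∀ x, 0 ≤ g x := fun x => inv_nonneg.2 ENNReal.toReal_nonneg
  have hae : (fun x => ENNReal.ofReal (g x)) =ᵐ[Q] fun x => (Q.rnDeriv R x)⁻¹ := by
    filter_upwards [hpos, hlt] with x h1 h2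
    rw [hg]
    rw [ENNReal.ofReal_inv_of_pos (ENNReal.toReal_pos h1.ne' h2.ne),
      ENNReal.ofReal_toReal h2.ne]
  have hinv : (fun x => (Q.rnDeriv R x)⁻¹) =ᵐ[Q] R.rnDeriv Q := Measure.inv_rnDeriv hQR
  have hlint : ∫⁻ x, ENNReal.ofReal (g x) ∂Q ≤ 1 := by
    rw [lintegral_congr_ae (hae.trans hinv)]
    exact Measure.lintegral_rnDeriv_le.trans_eq measure_univ
  have hgmeas : AEStronglyMeasurable g Q :=
    ((Measure.measurable_rnDeriv Q R).ennreal_toReal.inv).aestronglyMeasurable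
  have hgint : Integrable g Q := by
    refine ⟨hgmeas, ?_⟩
    rw [hasFiniteIntegral_iff_ofReal (Filter.Eventually.of_forall hgnn)]
    exact lt_of_le_of_lt hlint ENNReal.one_lt_top
  have hgval : ∫ x, g x ∂Q ≤ 1 := by
    rw [integral_eq_lintegral_of_nonneg_ae (Filter.Eventually.of_forall hgnn) hgmeas]
    have := ENNReal.toReal_mono ENNReal.one_ne_top hlint
    simpa using this
  have hptw : ∀ᵐ x ∂Q, 1 - g x ≤ Real.log (Q.rnDeriv R x).toReal := by
    filter_upwards [hpos, hlt] with x h1 h2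
    have ht : 0 < (Q.rnDeriv R x).toReal := ENNReal.toReal_pos h1.ne' h2.ne
    have := Real.log_le_sub_one_of_pos (inv_pos.2 ht)
    rw [Real.log_inv] at this
    rw [hg]
    linarith
  have hmono : ∫ x, (1 - g x) ∂Q ≤ ∫ x, Real.log (Q.rnDeriv R x).toReal ∂Q :=
    integral_mono_ae ((integrable_const (1 : ℝ)).sub hgint) hint hptw
  rw [integral_sub (integrable_const _) hgint, integral_const] at hmono
  simp only [measureReal_def, measure_univ, ENNReal.toReal_one, smul_eq_mul, one_mul] at hmono
  linarith

/-- if `λ_m` minimizes `λ ↦ E_P[e^{λ(X−m)}]`, with `λ_m` and `0` interior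
points of the finiteness domain of the MGF, then the exponential tilt `Q_{λ_m}` has mean `m`
and minimizes `KL(Q ∥ P)` over probability measures `Q` with mean `m`. -/
theorem tilt_minimizes_kl (P : Measure ℝ) [IsProbabilityMeasure P] (m lamm : ℝ)
    (h0 : (0 : ℝ) ∈ interior {lam : ℝ | Integrable (fun x => Real.exp (lam * x)) P})
    (hm : lamm ∈ interior {lam : ℝ | Integrable (fun x => Real.exp (lam * x)) P})
    (hmin : ∀ lam : ℝ,
      ∫⁻ x, ENNReal.ofReal (Real.exp (lamm * (x - m))) ∂P ≤
        ∫⁻ x, ENNReal.ofReal (Real.exp (lam * (x - m))) ∂P) :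
    (∫ x, x ∂(P.tilted (fun x => lamm * x)) = m) ∧
    ∀ Q : Measure ℝ, IsProbabilityMeasure Q → Integrable (fun x => x) Q →
      (∫ x, x ∂Q = m) → KL (P.tilted (fun x => lamm * x)) P ≤ KL Q P := by
  classical
  -- basic set
  set S : Set ℝ := {lam : ℝ | Integrable (fun x => Real.exp (lam * x)) P} with hS
  -- integrability transfer between exp (t*x) and exp (t*(x-m))
  have int_shift : ∀ t : ℝ, Integrable (fun x => Real.exp (t * x)) P →
      Integrable (fun x => Real.exp (t * (x - m))) P := by
    intro t h
    have : (fun x => Real.exp (t * (x - m))) =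
        fun x => Real.exp (t * x) * Real.exp (-(t * m)) := by
      funext x; rw [← Real.exp_add]; ring_nf
    rw [this]
    exact h.mul_const _
  -- get δ
  obtain ⟨ε, hε, hball⟩ : ∃ ε > 0, Metric.ball lamm ε ⊆ S := by
    obtain ⟨ε, hε, hball⟩ := Metric.mem_nhds_iff.1 (mem_interior_iff_mem_nhds.1 hm)
    exact ⟨ε, hε, hball⟩
  set δ : ℝ := ε / 4 with hδdef
  have hδ : 0 < δ := by positivity
  have hmem : ∀ c : ℝ, |c - lamm| < ε → Integrable (fun x => Real.exp (c * (x - m))) P := by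
    intro c hc
    exact int_shift c (hball (by simpa [Metric.mem_ball, Real.dist_eq] using hc))
  have hup : Integrable (fun x => Real.exp ((lamm + 2 * δ) * (x - m))) P :=
    hmem _ (by
      rw [show lamm + 2 * δ - lamm = 2 * δ by ring, abs_of_nonneg (by positivity), hδdef]
      linarith)
  have hdown : Integrable (fun x => Real.exp ((lamm - 2 * δ) * (x - m))) P :=
    hmem _ (by
      rw [show lamm - 2 * δ - lamm = -(2 * δ) by ring, abs_neg,
        abs_of_nonneg (by positivity), hδdef]
      linarith)
  have hZshift : Integrable (fun x => Real.exp (lamm * (x - m))) P :=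
    hmem _ (by simpa using hε)
  -- derivative of the shifted mgf
  set bound : ℝ → ℝ := fun x =>
    δ⁻¹ * (Real.exp ((lamm - 2 * δ) * (x - m)) + Real.exp ((lamm + 2 * δ) * (x - m))) with hbd
  have key := hasDerivAt_integral_of_dominated_loc_of_deriv_le
    (F := fun t (x : ℝ) => Real.exp (t * (x - m)))
    (F' := fun t (x : ℝ) => (x - m) * Real.exp (t * (x - m)))
    (x₀ := lamm) (s := Metric.ball lamm δ) (μ := P) (bound := bound) (Metric.ball_mem_nhds _ hδ)
    (Filter.Eventually.of_forall fun t =>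
      (Real.continuous_exp.comp
        (continuous_const.mul (continuous_id.sub continuous_const))).aestronglyMeasurable)
    hZshift
    (((continuous_id.sub continuous_const).mul
      (Real.continuous_exp.comp
        (continuous_const.mul (continuous_id.sub continuous_const)))).aestronglyMeasurable)
    (Filter.Eventually.of_forall ?_) ?_ (Filter.Eventually.of_forall ?_)
  rotate_left
  · -- bound
    intro x t ht
    rw [Metric.mem_ball, Real.dist_eq] at ht
    set u : ℝ := x - m with hu
    have h1 : ‖u * Real.exp (t * u)‖ = |u| * Real.exp (t * u) := by
      rw [norm_mul, Real.norm_eq_abs, Real.norm_eq_abs, abs_of_nonneg (Real.exp_pos _).le]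
    have h2 : |u| ≤ δ⁻¹ * Real.exp (δ * |u|) := by
      have h3 : δ * |u| ≤ Real.exp (δ * |u|) := by
        have := Real.add_one_le_exp (δ * |u|)
        linarith
      calc |u| = δ⁻¹ * (δ * |u|) := by field_simp
      _ ≤ δ⁻¹ * Real.exp (δ * |u|) := mul_le_mul_of_nonneg_left h3 (by positivity)
    have h4 : Real.exp (δ * |u| + t * u) ≤
        Real.exp ((lamm - 2 * δ) * u) + Real.exp ((lamm + 2 * δ) * u) := by
      rcases le_or_gt 0 u with h | h
      · rw [abs_of_nonneg h]
        have : δ * u + t * u = (t + δ) * u := by ring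
        rw [this]
        exact exp_between (by cases abs_lt.1 ht; linarith) (by cases abs_lt.1 ht; linarith)
      · rw [abs_of_neg h]
        have : δ * -u + t * u = (t - δ) * u := by ring
        rw [this]
        exact exp_between (by cases abs_lt.1 ht; linarith) (by cases abs_lt.1 ht; linarith)
    rw [h1, hbd]
    calc |u| * Real.exp (t * u) ≤ (δ⁻¹ * Real.exp (δ * |u|)) * Real.exp (t * u) :=
      mul_le_mul_of_nonneg_right h2 (Real.exp_pos _).le
    _ = δ⁻¹ * Real.exp (δ * |u| + t * u) := by rw [Real.exp_add]; ring
    _ ≤ δ⁻¹ * (Real.exp ((lamm - 2 * δ) * u) + Real.exp ((lamm + 2 * δ) * u)) := by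
      exact mul_le_mul_of_nonneg_left h4 (by positivity)
  · -- bound integrable
    exact (hdown.add hup).const_mul _
  · -- differentiability
    intro x t ht
    have h := (hasDerivAt_mul_const (x - m)).exp (x := t)
    simpa [mul_comm] using h
  obtain ⟨hF'int, hderiv⟩ := key
  -- local min
  have hlocmin : IsLocalMin (fun t => ∫ x, Real.exp (t * (x - m)) ∂P) lamm := by
    have : ∀ t ∈ Metric.ball lamm δ, (fun t => ∫ x, Real.exp (t * (x - m)) ∂P) lamm ≤
        (fun t => ∫ x, Real.exp (t * (x - m)) ∂P) t := by
      intro t ht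
      rw [Metric.mem_ball, Real.dist_eq] at ht
      have hti : Integrable (fun x => Real.exp (t * (x - m))) P :=
        hmem t (ht.trans (by rw [hδdef]; linarith))
      have e1 := ofReal_integral_eq_lintegral_ofReal hZshift
        (Filter.Eventually.of_forall fun x => (Real.exp_pos _).le)
      have e2 := ofReal_integral_eq_lintegral_ofReal hti
        (Filter.Eventually.of_forall fun x => (Real.exp_pos _).le)
      have := hmin t
      rw [← e1, ← e2] at this
      exact (ENNReal.ofReal_le_ofReal_iff
        (integral_nonneg fun x => (Real.exp_pos _).le)).1 this
    exact Filter.eventually_iff_exists_mem.2 ⟨Metric.ball lamm δ, Metric.ball_mem_nhds _ hδ, this⟩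
  have hzero : ∫ x, (x - m) * Real.exp (lamm * (x - m)) ∂P = 0 :=
    hlocmin.hasDerivAt_eq_zero hderiv
  -- basic quantities
  have hZmem : lamm ∈ S := hball (Metric.mem_ball_self hε)
  have hZint : Integrable (fun x => Real.exp (lamm * x)) P := hZmem
  set Z : ℝ := ∫ x, Real.exp (lamm * x) ∂P with hZ
  have hZpos : 0 < Z := integral_exp_pos hZint
  -- translate to untilted exponent
  have hshift_eq : ∀ x : ℝ, (x - m) * Real.exp (lamm * x) =
      ((x - m) * Real.exp (lamm * (x - m))) * Real.exp (lamm * m) := by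
    intro x; rw [mul_assoc, ← Real.exp_add]; ring_nf
  have h1 : Integrable (fun x => (x - m) * Real.exp (lamm * x)) P := by
    have := hF'int.mul_const (Real.exp (lamm * m))
    exact this.congr (Filter.Eventually.of_forall fun x => (hshift_eq x).symm)
  have h2 : ∫ x, (x - m) * Real.exp (lamm * x) ∂P = 0 := by
    calc ∫ x, (x - m) * Real.exp (lamm * x) ∂P
        = ∫ x, ((x - m) * Real.exp (lamm * (x - m))) * Real.exp (lamm * m) ∂P :=
          integral_congr_ae (Filter.Eventually.of_forall fun x => hshift_eq x)
    _ = (∫ x, (x - m) * Real.exp (lamm * (x - m)) ∂P) * Real.exp (lamm * m) :=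
          integral_mul_const _ _
    _ = 0 := by rw [hzero, zero_mul]
  have hx_int : Integrable (fun x => x * Real.exp (lamm * x)) P := by
    have := h1.add (hZint.const_mul m)
    exact this.congr (Filter.Eventually.of_forall fun x => by
      simp only [Pi.add_apply]; ring)
  have hx_val : ∫ x, x * Real.exp (lamm * x) ∂P = m * Z := by
    have : ∫ x, ((x - m) * Real.exp (lamm * x) + m * Real.exp (lamm * x)) ∂P
        = ∫ x, x * Real.exp (lamm * x) ∂P :=
      integral_congr_ae (Filter.Eventually.of_forall fun x => by ring)
    rw [← this, integral_add h1 (hZint.const_mul m), h2, integral_const_mul, zero_add, hZ]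
  set Pt : Measure ℝ := P.tilted (fun x => lamm * x) with hPt
  have hPtprob : IsProbabilityMeasure Pt := isProbabilityMeasure_tilted hZint
  -- mean of tilted
  have hmean : ∫ x, x ∂Pt = m := by
    rw [hPt, integral_tilted]
    have : ∀ x : ℝ, (Real.exp (lamm * x) / ∫ x, Real.exp (lamm * x) ∂P) • x
        = (x * Real.exp (lamm * x)) * Z⁻¹ := by
      intro x; rw [smul_eq_mul, ← hZ]; ring
    rw [integral_congr_ae (Filter.Eventually.of_forall this), integral_mul_const, hx_val]
    field_simp
  refine ⟨hmean, ?_⟩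
  -- integrability of x under Pt
  have hid_Pt : Integrable (fun x => x) Pt := by
    rw [hPt, Measure.tilted]
    rw [integrable_withDensity_iff]
    · refine (hx_int.mul_const Z⁻¹).congr ?_
      refine Filter.Eventually.of_forall fun x => ?_
      have hnn : (0 : ℝ) ≤ Real.exp (lamm * x) / ∫ x, Real.exp (lamm * x) ∂P :=
        div_nonneg (Real.exp_pos _).le (hZ ▸ hZpos.le)
      simp only [← hZ, div_eq_mul_inv]
      rw [ENNReal.toReal_ofReal (mul_nonneg (Real.exp_pos _).le (inv_nonneg.2 hZpos.le))]
      ring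
    · exact (Real.measurable_exp.comp (measurable_const.mul measurable_id)).div_const _
        |>.ennreal_ofReal
    · exact Filter.Eventually.of_forall fun x => ENNReal.ofReal_lt_top
  -- KL of Pt
  have hlogPt : (fun x => Real.log ((Pt.rnDeriv P x).toReal))
      =ᵐ[P] fun x => lamm * x - Real.log Z := by
    have := log_rnDeriv_tilted_left_self (μ := P) (f := fun x => lamm * x) hZint
    rw [← hZ] at this
    exact this
  have hPtP : Pt ≪ P := tilted_absolutelyContinuous P _
  have hPPt : P ≪ Pt := absolutelyContinuous_tilted hZint
  have hlogPt' : (fun x => Real.log ((Pt.rnDeriv P x).toReal))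
      =ᵐ[Pt] fun x => lamm * x - Real.log Z := hlogPt.filter_mono hPtP.ae_le
  have hsubPt : Integrable (fun x => lamm * x - Real.log Z) Pt :=
    ((hid_Pt.const_mul lamm).sub (integrable_const (Real.log Z))).congr
      (Filter.Eventually.of_forall fun x => by simp only [Pi.sub_apply])
  have hKLint : Integrable (fun x => Real.log ((Pt.rnDeriv P x).toReal)) Pt :=
    hsubPt.congr hlogPt'.symm
  have hKLval : ∫ x, Real.log ((Pt.rnDeriv P x).toReal) ∂Pt = lamm * m - Real.log Z := by
    rw [integral_congr_ae hlogPt',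
      integral_sub (hid_Pt.const_mul lamm) (integrable_const _),
      integral_const_mul, hmean, integral_const, measureReal_def, measure_univ]
    
    simp
  have hKLPt : KL Pt P = ((lamm * m - Real.log Z : ℝ) : EReal) := by
    rw [KL, if_pos ⟨hPtP, hKLint⟩, hKLval]
  -- the minimization
  intro Q hQprob hQid hQm
  by_cases hc : Q ≪ P ∧ Integrable (fun x => Real.log ((Q.rnDeriv P x).toReal)) Q
  · obtain ⟨hQac, hQlogint⟩ := hc
    have hQPt : Q ≪ Pt := hQac.trans hPPt
    -- decomposition a.e. Q
    have hmul : (fun x => Q.rnDeriv Pt x * Pt.rnDeriv P x) =ᵐ[Q] Q.rnDeriv P :=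
      (Measure.rnDeriv_mul_rnDeriv hQPt).filter_mono hQac.ae_le
    have hPtd : Pt.rnDeriv P =ᵐ[Q] fun x => ENNReal.ofReal (Real.exp (lamm * x) / Z) := by
      have := rnDeriv_tilted_left_self (μ := P) (f := fun x => lamm * x)
        ((measurable_const.mul measurable_id).aemeasurable)
      rw [← hZ] at this
      exact this.filter_mono hQac.ae_le
    have hQpos : ∀ᵐ x ∂Q, 0 < Q.rnDeriv Pt x := Measure.rnDeriv_pos hQPt
    have hQlt : ∀ᵐ x ∂Q, Q.rnDeriv Pt x < ⊤ :=
      ((Measure.rnDeriv_lt_top Q Pt).filter_mono hPPt.ae_le).filter_mono hQac.ae_le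
    have hdecomp : ∀ᵐ x ∂Q, Real.log ((Q.rnDeriv P x).toReal)
        = Real.log ((Q.rnDeriv Pt x).toReal) + (lamm * x - Real.log Z) := by
      filter_upwards [hmul, hPtd, hQpos, hQlt] with x h1 h2 h3 h4
      rw [← h1, h2, ENNReal.toReal_mul, ENNReal.toReal_ofReal (by positivity)]
      rw [Real.log_mul (ENNReal.toReal_pos h3.ne' h4.ne).ne' (by positivity)]
      rw [Real.log_div (Real.exp_ne_zero _) hZpos.ne', Real.log_exp]
    have hQsub : Integrable (fun x => lamm * x - Real.log Z) Q :=
      ((hQid.const_mul lamm).sub (integrable_const (Real.log Z))).congr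
        (Filter.Eventually.of_forall fun x => by simp only [Pi.sub_apply])
    have hQlogPt_int : Integrable (fun x => Real.log ((Q.rnDeriv Pt x).toReal)) Q := by
      refine ((hQlogint.sub hQsub).congr ?_)
      filter_upwards [hdecomp] with x h
      simp only [Pi.sub_apply]
      rw [h]; ring
    have hval : ∫ x, Real.log ((Q.rnDeriv P x).toReal) ∂Q
        = (∫ x, Real.log ((Q.rnDeriv Pt x).toReal) ∂Q) + (lamm * m - Real.log Z) := by
      rw [integral_congr_ae hdecomp,
        integral_add hQlogPt_int hQsub,
        integral_sub (hQid.const_mul lamm) (integrable_const _),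
        integral_const_mul, hQm, integral_const, measureReal_def, measure_univ]
      simp
    have hnn : 0 ≤ ∫ x, Real.log ((Q.rnDeriv Pt x).toReal) ∂Q :=
      kl_integral_nonneg hQPt hQlogPt_int
    rw [hKLPt, KL, if_pos ⟨hQac, hQlogint⟩]
    exact EReal.coe_le_coe_iff.2 (by rw [hval]; linarith)
  · have h2 : KL Q P = ⊤ := by unfold KL; rw [if_neg hc]
    rw [h2]
    exact le_top
end

section
/- Fix real numbers Γ > 1 and consider real-valued random variable Y with strictly increasing CDF at its (1/(1+Γ))-quantile γ⁻, with P[Y ≤ γ⁻] = P[Y < γ⁻] = 1/(1+Γ). Then among all measurable functions h with values in [1/Γ, Γ] satisfying E[h(Y)] = 1, the function h*(y) = Γ·1(y ≤ γ⁻) + (1/Γ)·1(y > γ⁻) minimizes E[Y h(Y)]. -/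
open MeasureTheory

/-- let `Γ > 1` and let `γ⁻` be the `1/(1+Γ)`-quantile of `Y`, where the
CDF is strictly increasing at `γ⁻` in the sense that
`P[Y ≤ γ⁻] = P[Y < γ⁻] = 1/(1+Γ)`. Then among all measurable `h : ℝ → [1/Γ, Γ]` with
`E[h(Y)] = 1`, the function `h*(y) = Γ·1(y ≤ γ⁻) + (1/Γ)·1(y > γ⁻)` minimizes `E[Y h(Y)]`. -/
theorem quantile_rule_minimizes {Ω : Type*} [MeasurableSpace Ω]
    (μ : Measure Ω) [IsProbabilityMeasure μ]
    (Y : Ω → ℝ) (hY : Measurable Y) (hYint : Integrable Y μ)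
    (Γ γm : ℝ) (hΓ : 1 < Γ)
    (hle : (μ {ω | Y ω ≤ γm}).toReal = 1 / (1 + Γ))
    (hlt : (μ {ω | Y ω < γm}).toReal = 1 / (1 + Γ)) :
    ∀ h : ℝ → ℝ, Measurable h → (∀ y, h y ∈ Set.Icc (1 / Γ) Γ) →
      (∫ ω, h (Y ω) ∂μ) = 1 →
      ∫ ω, Y ω * (if Y ω ≤ γm then Γ else 1 / Γ) ∂μ ≤ ∫ ω, Y ω * h (Y ω) ∂μ := by
  intro h hmeas hbound hint
  have hΓ0 : 0 < Γ := lt_trans one_pos hΓ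
  set s : Set Ω := {ω | Y ω ≤ γm} with hs
  have hsm : MeasurableSet s := measurableSet_le hY measurable_const
  set g : Ω → ℝ := fun ω => if Y ω ≤ γm then Γ else 1 / Γ with hgdef
  have hgm : Measurable g := Measurable.ite hsm measurable_const measurable_const
  have hgbound : ∀ ω, |g ω| ≤ Γ := by
    intro ω
    simp only [hgdef]
    split
    · rw [abs_of_pos hΓ0]
    · rw [abs_of_pos (by positivity)]
      calc 1 / Γ ≤ 1 := by rw [div_le_one hΓ0]; linarith
        _ ≤ Γ := hΓ.le
  have hg_int : Integrable g μ := by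
    apply Integrable.mono' (integrable_const Γ) hgm.aestronglyMeasurable
    exact Filter.Eventually.of_forall fun ω => by simpa using hgbound ω
  have hhb : ∀ ω, |h (Y ω)| ≤ Γ := by
    intro ω
    rcases hbound (Y ω) with ⟨h1, h2⟩
    have : 0 < 1 / Γ := by positivity
    rw [abs_le]; constructor <;> linarith
  have hh_int : Integrable (fun ω => h (Y ω)) μ := by
    apply Integrable.mono' (integrable_const Γ) (hmeas.comp hY).aestronglyMeasurable
    exact Filter.Eventually.of_forall fun ω => by simpa using hhb ω
  have hYg_int : Integrable (fun ω => Y ω * g ω) μ := by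
    apply Integrable.mono' (hYint.abs.const_mul Γ) (hY.mul hgm).aestronglyMeasurable
    refine Filter.Eventually.of_forall fun ω => ?_
    simp only [Pi.mul_apply, Real.norm_eq_abs, abs_mul]
    calc |Y ω| * |g ω| ≤ |Y ω| * Γ :=
          mul_le_mul_of_nonneg_left (hgbound ω) (abs_nonneg _)
      _ = Γ * |Y ω| := by ring
  have hYh_int : Integrable (fun ω => Y ω * h (Y ω)) μ := by
    apply Integrable.mono' (hYint.abs.const_mul Γ) (hY.mul (hmeas.comp hY)).aestronglyMeasurable
    refine Filter.Eventually.of_forall fun ω => ?_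
    simp only [Pi.mul_apply, Function.comp, Real.norm_eq_abs, abs_mul]
    calc |Y ω| * |h (Y ω)| ≤ |Y ω| * Γ :=
          mul_le_mul_of_nonneg_left (hhb ω) (abs_nonneg _)
      _ = Γ * |Y ω| := by ring
  -- integral of g is 1
  have hgeq : g = fun ω => s.indicator (fun _ => Γ - 1 / Γ) ω + 1 / Γ := by
    funext ω
    by_cases hc : Y ω ≤ γm
    · have hmem : ω ∈ s := hc
      simp [hgdef, hc, Set.indicator_of_mem hmem]
    · have hmem : ω ∉ s := hc
      simp [hgdef, hc, Set.indicator_of_notMem hmem]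
  have hint_g : ∫ ω, g ω ∂μ = 1 := by
    rw [hgeq, integral_add ((integrable_const _).indicator hsm) (integrable_const _),
      integral_indicator_const _ hsm, integral_const]
    simp only [measure_univ, probReal_univ, ENNReal.toReal_one, smul_eq_mul, one_mul]
    rw [show μ.real s = 1 / (1 + Γ) from hle]
    have h1 : (0:ℝ) < 1 + Γ := by linarith
    field_simp
    ring
  -- key nonnegativity
  have key_int : Integrable (fun ω => (Y ω - γm) * (h (Y ω) - g ω)) μ := by
    have heq : (fun ω => (Y ω - γm) * (h (Y ω) - g ω))
        = fun ω => Y ω * h (Y ω) - Y ω * g ω - γm * h (Y ω) + γm * g ω := by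
      funext ω; ring
    rw [heq]
    exact ((hYh_int.sub hYg_int).sub (hh_int.const_mul γm)).add (hg_int.const_mul γm)
  have keynn : 0 ≤ ∫ ω, (Y ω - γm) * (h (Y ω) - g ω) ∂μ := by
    refine integral_nonneg fun ω => ?_
    simp only [Pi.zero_apply]
    rcases hbound (Y ω) with ⟨h1, h2⟩
    by_cases hc : Y ω ≤ γm
    · have hgval : g ω = Γ := if_pos hc
      have : h (Y ω) - g ω ≤ 0 := by rw [hgval]; linarith
      nlinarith [this]
    · have hgval : g ω = 1 / Γ := if_neg hc
      push_neg at hc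
      have : 0 ≤ h (Y ω) - g ω := by rw [hgval]; linarith
      exact mul_nonneg (by linarith) this
  have hrest : Integrable (fun ω => γm * h (Y ω) - γm * g ω) μ :=
    (hh_int.const_mul γm).sub (hg_int.const_mul γm)
  have A : ∫ ω, (Y ω - γm) * (h (Y ω) - g ω) ∂μ
      = (∫ ω, Y ω * h (Y ω) ∂μ) - ∫ ω, Y ω * g ω ∂μ := by
    have c1 : ∫ ω, (Y ω - γm) * (h (Y ω) - g ω) ∂μ
        = ∫ ω, (Y ω * h (Y ω) - Y ω * g ω) - (γm * h (Y ω) - γm * g ω) ∂μ :=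
      integral_congr_ae (Filter.Eventually.of_forall fun ω => by ring)
    have c2 : ∫ ω, (Y ω * h (Y ω) - Y ω * g ω) - (γm * h (Y ω) - γm * g ω) ∂μ
        = (∫ ω, Y ω * h (Y ω) - Y ω * g ω ∂μ) - ∫ ω, γm * h (Y ω) - γm * g ω ∂μ :=
      integral_sub (hYh_int.sub hYg_int) hrest
    have c3 : ∫ ω, Y ω * h (Y ω) - Y ω * g ω ∂μ
        = (∫ ω, Y ω * h (Y ω) ∂μ) - ∫ ω, Y ω * g ω ∂μ := integral_sub hYh_int hYg_int
    have c4 : ∫ ω, γm * h (Y ω) - γm * g ω ∂μ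
        = (∫ ω, γm * h (Y ω) ∂μ) - ∫ ω, γm * g ω ∂μ :=
      integral_sub (hh_int.const_mul γm) (hg_int.const_mul γm)
    have c5 : ∫ ω, γm * h (Y ω) ∂μ = γm * ∫ ω, h (Y ω) ∂μ := integral_const_mul γm _
    have c6 : ∫ ω, γm * g ω ∂μ = γm * ∫ ω, g ω ∂μ := integral_const_mul γm _
    rw [c1, c2, c3, c4, c5, c6, hint, hint_g]
    ring
  show ∫ ω, Y ω * g ω ∂μ ≤ ∫ ω, Y ω * h (Y ω) ∂μ
  linarith [keynn, A]
end

section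
/- Let P₁ and P₂ be probability measures on ℝ with finite first moments, P₁ absolutely continuous with continuous strictly increasing CDF F₁, and let F₂ be the CDF of P₂. Let h : [0,∞) → [0,∞) be convex with h(0) = 0. Then the monotone coupling (X, F₂⁻¹(F₁(X))) with X ∼ P₁ minimizes E[h(|X − Y|)] over all couplings (X, Y) of (P₁, P₂), and the minimum equals ∫₀¹ h(|F₁⁻¹(u) − F₂⁻¹(u)|) du. -/
open MeasureTheory ProbabilityTheory Set Filter Topology
open scoped ENNReal

noncomputable def qf (μ : Measure ℝ) (u : ℝ) : ℝ := sInf {x : ℝ | u ≤ cdf μ x}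


section QF
variable (μ : Measure ℝ) [IsProbabilityMeasure μ] {u : ℝ}

lemma qf_set_nonempty (h1 : u < 1) : {x : ℝ | u ≤ cdf μ x}.Nonempty := by
  obtain ⟨x, hx⟩ := ((tendsto_cdf_atTop μ).eventually (lt_mem_nhds h1)).exists
  exact ⟨x, hx.le⟩

lemma qf_set_bddBelow (h0 : 0 < u) : BddBelow {x : ℝ | u ≤ cdf μ x} := by
  obtain ⟨x, hx⟩ := ((tendsto_cdf_atBot μ).eventually (gt_mem_nhds h0)).exists
  refine ⟨x, fun y hy => ?_⟩
  by_contra hxy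
  exact absurd (hy.trans (monotone_cdf μ (le_of_not_ge hxy))) (not_le.2 hx)

lemma le_cdf_qf (h0 : 0 < u) (h1 : u < 1) : u ≤ cdf μ (qf μ u) := by
  have hne := qf_set_nonempty μ h1
  have hbdd := qf_set_bddBelow μ h0
  have hev : ∀ᶠ y in 𝓝[>] (qf μ u), u ≤ cdf μ y := by
    filter_upwards [self_mem_nhdsWithin] with y hy
    obtain ⟨x, hx, hxy⟩ := (csInf_lt_iff hbdd hne).1 hy
    exact hx.trans (monotone_cdf μ hxy.le)
  have ht : Tendsto (cdf μ) (𝓝[>] (qf μ u)) (𝓝 (cdf μ (qf μ u))) :=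
    ((cdf μ).right_continuous (qf μ u)).tendsto.mono_left
      (nhdsWithin_mono _ Ioi_subset_Ici_self)
  exact ge_of_tendsto ht hev

lemma qf_le_iff (h0 : 0 < u) (h1 : u < 1) {t : ℝ} : qf μ u ≤ t ↔ u ≤ cdf μ t := by
  constructor
  · intro ht
    exact (le_cdf_qf μ h0 h1).trans (monotone_cdf μ ht)
  · intro ht
    exact csInf_le (qf_set_bddBelow μ h0) ht

lemma lt_qf_iff (h0 : 0 < u) (h1 : u < 1) {t : ℝ} : t < qf μ u ↔ cdf μ t < u := by
  rw [← not_le, ← not_le, qf_le_iff μ h0 h1]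

end QF

section B
variable (μ : Measure ℝ) [IsProbabilityMeasure μ]

lemma cdf_pos_of_strictMono (hmono : StrictMono (fun x => (cdf μ x : ℝ))) (x : ℝ) :
    0 < cdf μ x :=
  lt_of_le_of_lt (cdf_nonneg μ (x - 1)) (hmono (by linarith))

lemma cdf_lt_one_of_strictMono (hmono : StrictMono (fun x => (cdf μ x : ℝ))) (x : ℝ) :
    cdf μ x < 1 :=
  lt_of_lt_of_le (hmono (show x < x + 1 by linarith)) (cdf_le_one μ (x + 1))

lemma qf_cdf (hmono : StrictMono (fun x => (cdf μ x : ℝ))) (x : ℝ) :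
    qf μ (cdf μ x) = x := by
  have : {y : ℝ | cdf μ x ≤ cdf μ y} = Ici x := by
    ext y; exact hmono.le_iff_le
  rw [qf, this, csInf_Ici]

lemma map_cdf_eq_uniform (hcont : Continuous (fun x => (cdf μ x : ℝ)))
    (hmono : StrictMono (fun x => (cdf μ x : ℝ))) :
    μ.map (fun x => (cdf μ x : ℝ)) = volume.restrict (Ioo (0:ℝ) 1) := by
  have hmeas : Measurable (fun x => (cdf μ x : ℝ)) := (monotone_cdf μ).measurable
  have : IsProbabilityMeasure (μ.map (fun x => (cdf μ x : ℝ))) :=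
    Measure.isProbabilityMeasure_map hmeas.aemeasurable
  have : IsFiniteMeasure (volume.restrict (Ioo (0:ℝ) 1)) :=
    ⟨by rw [Measure.restrict_apply_univ, Real.volume_Ioo]; simp⟩
  refine Measure.ext_of_Iic _ _ (fun u => ?_)
  rw [Measure.map_apply hmeas measurableSet_Iic,
    Measure.restrict_apply' measurableSet_Ioo]
  rcases le_or_gt u 0 with hu | hu
  · have h1 : (fun x => (cdf μ x : ℝ)) ⁻¹' (Iic u) = ∅ := by
      ext x
      simp only [mem_preimage, mem_Iic, mem_empty_iff_false, iff_false, not_le]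
      exact lt_of_le_of_lt hu (cdf_pos_of_strictMono μ hmono x)
    have h2 : Iic u ∩ Ioo (0:ℝ) 1 = ∅ := by
      ext x
      simp only [mem_inter_iff, mem_Iic, mem_Ioo, mem_empty_iff_false, iff_false, not_and]
      intro hx hx0; linarith
    rw [h1, h2]; simp
  rcases le_or_gt 1 u with hu1 | hu1
  · have h1 : (fun x => (cdf μ x : ℝ)) ⁻¹' (Iic u) = univ := by
      ext x
      simp only [mem_preimage, mem_Iic, mem_univ, iff_true]
      exact (cdf_lt_one_of_strictMono μ hmono x).le.trans hu1
    have h2 : Iic u ∩ Ioo (0:ℝ) 1 = Ioo 0 1 := by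
      refine inter_eq_self_of_subset_right (fun x hx => ?_)
      exact le_trans hx.2.le hu1
    rw [h1, h2, measure_univ, Real.volume_Ioo]
    simp
  · -- 0 < u < 1 : use IVT to find x with cdf x = u
    obtain ⟨a, ha⟩ := ((tendsto_cdf_atBot μ).eventually (gt_mem_nhds hu)).exists
    obtain ⟨b, hb⟩ := ((tendsto_cdf_atTop μ).eventually (lt_mem_nhds hu1)).exists
    have hab : a ≤ b := by
      by_contra hab
      exact absurd ((monotone_cdf μ) (le_of_not_ge hab)) (not_le.2 (ha.trans hb))
    obtain ⟨c, _, hc⟩ := intermediate_value_Icc hab hcont.continuousOn ⟨ha.le, hb.le⟩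
    have h1 : (fun x => (cdf μ x : ℝ)) ⁻¹' (Iic u) = Iic c := by
      ext x
      simp only [mem_preimage, mem_Iic, ← hc]
      exact hmono.le_iff_le
    have h2 : Iic u ∩ Ioo (0:ℝ) 1 = Ioc 0 u := by
      ext x
      simp only [mem_inter_iff, mem_Iic, mem_Ioo, mem_Ioc]
      constructor
      · rintro ⟨h1', h2', _⟩; exact ⟨h2', h1'⟩
      · rintro ⟨h1', h2'⟩; exact ⟨h2', h1', lt_of_le_of_lt h2' hu1⟩
    rw [h1, h2, ← ofReal_cdf μ c]
    simp only at hc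
    rw [hc, Real.volume_Ioc]
    simp

end B

/-- A measurable globalization of the quantile function. -/
noncomputable def qf' (μ : Measure ℝ) (u : ℝ) : ℝ :=
  if 0 < u ∧ u < 1 then qf μ u else 0

lemma measurable_qf' (μ : Measure ℝ) [IsProbabilityMeasure μ] : Measurable (qf' μ) := by
  apply measurable_of_Iic
  intro t
  have : qf' μ ⁻¹' (Iic t) =
      (Ioo (0:ℝ) 1 ∩ Iic (cdf μ t)) ∪ (if 0 ≤ t then (Ioo (0:ℝ) 1)ᶜ else ∅) := by
    ext u
    by_cases hu : 0 < u ∧ u < 1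
    · simp only [mem_preimage, mem_Iic, qf', if_pos hu, mem_union, mem_inter_iff, mem_Ioo,
        mem_compl_iff]
      rw [qf_le_iff μ hu.1 hu.2]
      constructor
      · intro hle; exact Or.inl ⟨hu, hle⟩
      · rintro (⟨_, hle⟩ | hmem)
        · exact hle
        · by_cases ht : 0 ≤ t
          · rw [if_pos ht] at hmem; exact absurd hu hmem
          · rw [if_neg ht] at hmem; exact absurd hmem (notMem_empty u)
    · simp only [mem_preimage, mem_Iic, qf', if_neg hu, mem_union, mem_inter_iff, mem_Ioo,
        mem_compl_iff]
      constructor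
      · intro h0t
        right
        rw [if_pos h0t]
        exact fun hmem => hu ⟨hmem.1, hmem.2⟩
      · rintro (⟨hmem, _⟩ | hmem)
        · exact absurd hmem hu
        · by_cases ht : 0 ≤ t
          · exact ht
          · rw [if_neg ht] at hmem; exact absurd hmem (notMem_empty u)
  rw [this]
  refine (measurableSet_Ioo.inter measurableSet_Iic).union ?_
  split <;> simp [measurableSet_Ioo.compl]

lemma qf_eq_qf'_ae (μ : Measure ℝ) [IsProbabilityMeasure μ] :
    qf μ =ᵐ[volume.restrict (Ioo (0:ℝ) 1)] qf' μ := by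
  rw [Filter.EventuallyEq, ae_restrict_iff' measurableSet_Ioo]
  filter_upwards with u hu
  rw [qf', if_pos ⟨hu.1, hu.2⟩]

lemma aemeasurable_qf (μ : Measure ℝ) [IsProbabilityMeasure μ] :
    AEMeasurable (qf μ) (volume.restrict (Ioo (0:ℝ) 1)) :=
  ⟨qf' μ, measurable_qf' μ, qf_eq_qf'_ae μ⟩

lemma hinge_split {a : ℝ} (ha : 0 ≤ a) (x y : ℝ) :
    ENNReal.ofReal (|x - y| - a) =
      ENNReal.ofReal (y - x - a) + ENNReal.ofReal (x - y - a) := by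
  rcases le_total x y with hxy | hxy
  · rw [abs_of_nonpos (by linarith), ENNReal.ofReal_eq_zero.2 (by linarith : x - y - a ≤ 0)]
    ring_nf
  · rw [abs_of_nonneg (by linarith), ENNReal.ofReal_eq_zero.2 (by linarith : y - x - a ≤ 0)]
    ring_nf

lemma lintegral_hinge_half (ρ : Measure (ℝ × ℝ)) [SFinite ρ] (a : ℝ) :
    ∫⁻ p, ENNReal.ofReal (p.2 - p.1 - a) ∂ρ
      = ∫⁻ t, ρ {p : ℝ × ℝ | p.1 ≤ t ∧ t + a < p.2} ∂volume := by
  set S : Set ((ℝ × ℝ) × ℝ) := {q | q.1.1 ≤ q.2 ∧ q.2 + a < q.1.2} with hSdef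
  have hS : MeasurableSet S := by
    apply MeasurableSet.inter
    · exact measurableSet_le (measurable_fst.fst) measurable_snd
    · exact measurableSet_lt (measurable_snd.add_const a) (measurable_fst.snd)
  have step1 : ∀ p : ℝ × ℝ, ENNReal.ofReal (p.2 - p.1 - a)
      = ∫⁻ t, S.indicator (1 : ((ℝ × ℝ) × ℝ) → ℝ≥0∞) (p, t) ∂volume := by
    intro p
    have h1 : (fun t => S.indicator (1 : ((ℝ × ℝ) × ℝ) → ℝ≥0∞) (p, t))
        = (Ico p.1 (p.2 - a)).indicator (1 : ℝ → ℝ≥0∞) := by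
      ext t
      have hmem : ((p, t) ∈ S) ↔ t ∈ Ico p.1 (p.2 - a) := by
        simp only [hSdef, mem_setOf_eq, mem_Ico, lt_sub_iff_add_lt]
      simp [Set.indicator_apply, hmem]
    rw [h1, lintegral_indicator_one measurableSet_Ico, Real.volume_Ico]
    ring_nf
  simp_rw [step1]
  rw [lintegral_lintegral_swap (by exact (measurable_one.indicator hS).aemeasurable)]
  congr 1
  ext t
  have h2 : (fun p : ℝ × ℝ => S.indicator (1 : ((ℝ × ℝ) × ℝ) → ℝ≥0∞) (p, t))
      = ({p : ℝ × ℝ | p.1 ≤ t ∧ t + a < p.2}).indicator (1 : ℝ × ℝ → ℝ≥0∞) := by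
    ext p
    simp only [indicator, hSdef, mem_setOf_eq, Pi.one_apply]
  rw [h2, lintegral_indicator_one]
  exact (measurableSet_le measurable_fst measurable_const).inter
    (measurableSet_lt measurable_const measurable_snd)

lemma lintegral_hinge_half' (ρ : Measure (ℝ × ℝ)) [SFinite ρ] (a : ℝ) :
    ∫⁻ p, ENNReal.ofReal (p.1 - p.2 - a) ∂ρ
      = ∫⁻ t, ρ {p : ℝ × ℝ | p.2 ≤ t ∧ t + a < p.1} ∂volume := by
  set S : Set ((ℝ × ℝ) × ℝ) := {q | q.1.2 ≤ q.2 ∧ q.2 + a < q.1.1} with hSdef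
  have hS : MeasurableSet S := by
    apply MeasurableSet.inter
    · exact measurableSet_le (measurable_fst.snd) measurable_snd
    · exact measurableSet_lt (measurable_snd.add_const a) (measurable_fst.fst)
  have step1 : ∀ p : ℝ × ℝ, ENNReal.ofReal (p.1 - p.2 - a)
      = ∫⁻ t, S.indicator (1 : ((ℝ × ℝ) × ℝ) → ℝ≥0∞) (p, t) ∂volume := by
    intro p
    have h1 : (fun t => S.indicator (1 : ((ℝ × ℝ) × ℝ) → ℝ≥0∞) (p, t))
        = (Ico p.2 (p.1 - a)).indicator (1 : ℝ → ℝ≥0∞) := by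
      ext t
      have hmem : ((p, t) ∈ S) ↔ t ∈ Ico p.2 (p.1 - a) := by
        simp only [hSdef, mem_setOf_eq, mem_Ico, lt_sub_iff_add_lt]
      simp [Set.indicator_apply, hmem]
    rw [h1, lintegral_indicator_one measurableSet_Ico, Real.volume_Ico]
    ring_nf
  simp_rw [step1]
  rw [lintegral_lintegral_swap (by exact (measurable_one.indicator hS).aemeasurable)]
  congr 1
  ext t
  have h2 : (fun p : ℝ × ℝ => S.indicator (1 : ((ℝ × ℝ) × ℝ) → ℝ≥0∞) (p, t))
      = ({p : ℝ × ℝ | p.2 ≤ t ∧ t + a < p.1}).indicator (1 : ℝ × ℝ → ℝ≥0∞) := by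
    ext p
    simp only [indicator, hSdef, mem_setOf_eq, Pi.one_apply]
  rw [h2, lintegral_indicator_one]
  exact (measurableSet_le measurable_snd measurable_const).inter
    (measurableSet_lt measurable_const measurable_fst)

/-- Layer-cake/Tonelli representation of the expectation of a hinge cost. -/
lemma lintegral_hinge (ρ : Measure (ℝ × ℝ)) [SFinite ρ] {a : ℝ} (ha : 0 ≤ a) :
    ∫⁻ p, ENNReal.ofReal (|p.1 - p.2| - a) ∂ρ
      = (∫⁻ t, ρ {p : ℝ × ℝ | p.1 ≤ t ∧ t + a < p.2} ∂volume)
        + ∫⁻ t, ρ {p : ℝ × ℝ | p.2 ≤ t ∧ t + a < p.1} ∂volume := by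
  simp_rw [fun p : ℝ × ℝ => hinge_split ha p.1 p.2]
  rw [lintegral_add_left (by fun_prop), lintegral_hinge_half, lintegral_hinge_half']

lemma vol_qf_set (μ ν : Measure ℝ) [IsProbabilityMeasure μ] [IsProbabilityMeasure ν]
    (t s : ℝ) :
    volume ({u : ℝ | qf μ u ≤ t ∧ s < qf ν u} ∩ Ioo (0:ℝ) 1)
      = ENNReal.ofReal (cdf μ t - cdf ν s) := by
  have hset : {u : ℝ | qf μ u ≤ t ∧ s < qf ν u} ∩ Ioo (0:ℝ) 1
      = Ioc (cdf ν s) (cdf μ t) ∩ Ioo (0:ℝ) 1 := by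
    ext u
    simp only [mem_inter_iff, mem_setOf_eq, mem_Ioc, mem_Ioo, and_congr_left_iff]
    intro hu
    rw [qf_le_iff μ hu.1 hu.2, lt_qf_iff ν hu.1 hu.2, and_comm]
  rw [hset]
  refine le_antisymm ?_ ?_
  · calc volume (Ioc (cdf ν s) (cdf μ t) ∩ Ioo (0:ℝ) 1)
        ≤ volume (Ioc (cdf ν s) (cdf μ t)) := measure_mono inter_subset_left
      _ = ENNReal.ofReal (cdf μ t - cdf ν s) := Real.volume_Ioc
  · have hsub : Ioo (cdf ν s) (cdf μ t) ⊆ Ioc (cdf ν s) (cdf μ t) ∩ Ioo (0:ℝ) 1 := by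
      intro u hu
      refine ⟨⟨hu.1, hu.2.le⟩, lt_of_le_of_lt (cdf_nonneg ν s) hu.1,
        lt_of_lt_of_le hu.2 (cdf_le_one μ t)⟩
    calc ENNReal.ofReal (cdf μ t - cdf ν s) = volume (Ioo (cdf ν s) (cdf μ t)) :=
          Real.volume_Ioo.symm
      _ ≤ _ := measure_mono hsub

lemma coupling_section_bound {μ ν : Measure ℝ} [IsProbabilityMeasure μ] [IsProbabilityMeasure ν]
    {J : Measure (ℝ × ℝ)} [IsProbabilityMeasure J] {X Y : ℝ × ℝ → ℝ}
    (hX : Measurable X) (hY : Measurable Y)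
    (hJX : J.map X = μ) (hJY : J.map Y = ν) (t s : ℝ) :
    ENNReal.ofReal (cdf μ t - cdf ν s) ≤ J {p : ℝ × ℝ | X p ≤ t ∧ s < Y p} := by
  have hfst : J {p : ℝ × ℝ | X p ≤ t} = ENNReal.ofReal (cdf μ t) := by
    rw [ofReal_cdf, ← hJX, Measure.map_apply hX measurableSet_Iic]; rfl
  have hsnd : J {p : ℝ × ℝ | Y p ≤ s} = ENNReal.ofReal (cdf ν s) := by
    rw [ofReal_cdf, ← hJY, Measure.map_apply hY measurableSet_Iic]; rfl
  have hsub : {p : ℝ × ℝ | X p ≤ t}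
      ⊆ {p : ℝ × ℝ | X p ≤ t ∧ s < Y p} ∪ {p : ℝ × ℝ | Y p ≤ s} := by
    intro p hp
    rcases lt_or_ge s (Y p) with hs | hs
    · exact Or.inl ⟨hp, hs⟩
    · exact Or.inr hs
  have hineq : ENNReal.ofReal (cdf μ t) ≤ J {p : ℝ × ℝ | X p ≤ t ∧ s < Y p}
      + ENNReal.ofReal (cdf ν s) := by
    rw [← hfst, ← hsnd]
    exact (measure_mono hsub).trans (measure_union_le _ _)
  rw [ENNReal.ofReal_sub _ (cdf_nonneg ν s)]
  exact tsub_le_iff_right.2 hineq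

lemma hinge_key (P₁ P₂ : Measure ℝ) [IsProbabilityMeasure P₁] [IsProbabilityMeasure P₂]
    (J : Measure (ℝ × ℝ)) [IsProbabilityMeasure J]
    (hJ1 : J.map Prod.fst = P₁) (hJ2 : J.map Prod.snd = P₂) {a : ℝ} (ha : 0 ≤ a) :
    ∫⁻ u in Ioo (0:ℝ) 1, ENNReal.ofReal (|qf P₁ u - qf P₂ u| - a)
      ≤ ∫⁻ p, ENNReal.ofReal (|p.1 - p.2| - a) ∂J := by
  have hq : AEMeasurable (fun u => (qf P₁ u, qf P₂ u)) (volume.restrict (Ioo (0:ℝ) 1)) :=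
    (aemeasurable_qf P₁).prodMk (aemeasurable_qf P₂)
  set ρ₀ : Measure (ℝ × ℝ) := (volume.restrict (Ioo (0:ℝ) 1)).map
    (fun u => (qf P₁ u, qf P₂ u)) with hρ₀
  have hfin : IsFiniteMeasure ρ₀ := by
    constructor
    rw [hρ₀, Measure.map_apply_of_aemeasurable hq MeasurableSet.univ, preimage_univ,
      Measure.restrict_apply_univ, Real.volume_Ioo]
    simp
  have hLHS : ∫⁻ u in Ioo (0:ℝ) 1, ENNReal.ofReal (|qf P₁ u - qf P₂ u| - a)
      = ∫⁻ p, ENNReal.ofReal (|p.1 - p.2| - a) ∂ρ₀ := by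
    rw [hρ₀, lintegral_map' (by fun_prop) hq]
  rw [hLHS, lintegral_hinge ρ₀ ha, lintegral_hinge J ha]
  have hb1 : ∀ t : ℝ, ρ₀ {p : ℝ × ℝ | p.1 ≤ t ∧ t + a < p.2}
      ≤ J {p : ℝ × ℝ | p.1 ≤ t ∧ t + a < p.2} := by
    intro t
    have hms : MeasurableSet {p : ℝ × ℝ | p.1 ≤ t ∧ t + a < p.2} :=
      (measurableSet_le measurable_fst measurable_const).inter
        (measurableSet_lt measurable_const measurable_snd)
    rw [hρ₀, Measure.map_apply_of_aemeasurable hq hms, Measure.restrict_apply' measurableSet_Ioo]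
    have : (fun u => (qf P₁ u, qf P₂ u)) ⁻¹' {p : ℝ × ℝ | p.1 ≤ t ∧ t + a < p.2}
        = {u : ℝ | qf P₁ u ≤ t ∧ (t + a) < qf P₂ u} := rfl
    rw [this, vol_qf_set P₁ P₂ t (t + a)]
    exact coupling_section_bound measurable_fst measurable_snd hJ1 hJ2 t (t + a)
  have hb2 : ∀ t : ℝ, ρ₀ {p : ℝ × ℝ | p.2 ≤ t ∧ t + a < p.1}
      ≤ J {p : ℝ × ℝ | p.2 ≤ t ∧ t + a < p.1} := by
    intro t
    have hms : MeasurableSet {p : ℝ × ℝ | p.2 ≤ t ∧ t + a < p.1} :=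
      (measurableSet_le measurable_snd measurable_const).inter
        (measurableSet_lt measurable_const measurable_fst)
    rw [hρ₀, Measure.map_apply_of_aemeasurable hq hms, Measure.restrict_apply' measurableSet_Ioo]
    have : (fun u => (qf P₁ u, qf P₂ u)) ⁻¹' {p : ℝ × ℝ | p.2 ≤ t ∧ t + a < p.1}
        = {u : ℝ | qf P₂ u ≤ t ∧ (t + a) < qf P₁ u} := rfl
    rw [this, vol_qf_set P₂ P₁ t (t + a)]
    exact coupling_section_bound measurable_snd measurable_fst hJ2 hJ1 t (t + a)
  exact add_le_add (lintegral_mono hb1) (lintegral_mono hb2)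

/-- Coefficients: `hc h δ (k+1)` is the slope of `h` on `[kδ, (k+1)δ]`. -/
noncomputable def hc (h : ℝ → ℝ) (δ : ℝ) : ℕ → ℝ
  | 0 => 0
  | (k+1) => (h ((k+1)*δ) - h (k*δ))/δ

/-- Piecewise-linear lower approximation of `h`, as a sum of hinge functions. -/
noncomputable def approxE (h : ℝ → ℝ) (δ : ℝ) (r : ℝ) : ℝ≥0∞ :=
  ∑' k : ℕ, ENNReal.ofReal (hc h δ (k+1) - hc h δ k) * ENNReal.ofReal (r - (k+1)*δ)

lemma measurable_approxE (h : ℝ → ℝ) (δ : ℝ) : Measurable (approxE h δ) := by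
  apply Measurable.ennreal_tsum
  intro k
  exact (ENNReal.continuous_ofReal.comp (continuous_id.sub continuous_const)).measurable.const_mul _

section Approx
variable {h : ℝ → ℝ} (hconv : ConvexOn ℝ (Set.Ici 0) h) (h0 : h 0 = 0) (hpos : ∀ t, 0 ≤ h t)
  {δ : ℝ} (hδ : 0 < δ)

include hconv h0 hpos in
lemma h_mono : ∀ {s t : ℝ}, 0 ≤ s → s ≤ t → h s ≤ h t := by
  intro s t hs hst
  rcases eq_or_lt_of_le hst with rfl | hlt
  · exact le_refl _
  · rcases eq_or_lt_of_le hs with rfl | hs0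
    · rw [h0]; exact hpos t
    · have hsl := hconv.slope_mono_adjacent (Set.mem_Ici.mpr (le_refl (0:ℝ)))
        (Set.mem_Ici.mpr (le_of_lt (hs0.trans hlt))) hs0 hlt
      rw [h0] at hsl
      rcases le_or_gt (h s) 0 with hh | hh
      · exact hh.trans (hpos t)
      · have h1 : 0 < (h s - 0) / (s - 0) := div_pos (by linarith) (by linarith)
        have h2 : 0 < (h t - h s) / (t - s) := lt_of_lt_of_le h1 hsl
        have h3 : 0 < t - s := by linarith
        have h4 := (div_pos_iff.1 h2)
        rcases h4 with ⟨ha, hb⟩ | ⟨ha, hb⟩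
        · linarith
        · linarith

include hconv h0 hpos hδ in
lemma hc_nonneg : ∀ k, 0 ≤ hc h δ k := by
  intro k
  cases k with
  | zero => exact le_refl 0
  | succ k =>
    show 0 ≤ (h ((k+1)*δ) - h (k*δ))/δ
    apply div_nonneg _ hδ.le
    have := h_mono hconv h0 hpos (by positivity : (0:ℝ) ≤ (k:ℝ)*δ)
      (by nlinarith : (k:ℝ)*δ ≤ ((k:ℝ)+1)*δ)
    push_cast
    linarith [this]

include hconv h0 hpos hδ in
lemma hc_mono : ∀ k, hc h δ k ≤ hc h δ (k+1) := by
  intro k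
  cases k with
  | zero => exact hc_nonneg hconv h0 hpos hδ 1
  | succ k =>
    have hx : ((k:ℝ))*δ ∈ Set.Ici (0:ℝ) := Set.mem_Ici.mpr (by positivity)
    have hz : ((k:ℝ)+2)*δ ∈ Set.Ici (0:ℝ) := Set.mem_Ici.mpr (by positivity)
    have hxy : (k:ℝ)*δ < ((k:ℝ)+1)*δ := by nlinarith
    have hyz : ((k:ℝ)+1)*δ < ((k:ℝ)+2)*δ := by nlinarith
    have hsl := hconv.slope_mono_adjacent hx hz hxy hyz
    have e1 : ((k:ℝ)+1)*δ - (k:ℝ)*δ = δ := by ring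
    have e2 : ((k:ℝ)+2)*δ - ((k:ℝ)+1)*δ = δ := by ring
    rw [e1, e2] at hsl
    simp only [hc]
    push_cast
    convert hsl using 3
    · rfl
    · push_cast; ring
end Approx

section Approx2
variable {h : ℝ → ℝ} (hconv : ConvexOn ℝ (Set.Ici 0) h) (h0 : h 0 = 0) (hpos : ∀ t, 0 ≤ h t)
  {δ : ℝ} (hδ : 0 < δ)

include h0 hδ in
lemma partial_sum_id : ∀ (j : ℕ) (r : ℝ),
    ∑ k ∈ Finset.range j, (hc h δ (k+1) - hc h δ k) * (r - ((k:ℝ)+1)*δ)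
      = hc h δ j * (r - (j:ℝ)*δ) + h ((j:ℝ)*δ) - hc h δ j * δ := by
  intro j
  induction j with
  | zero =>
    intro r
    simp [hc, h0]
  | succ j ih =>
    intro r
    have key : hc h δ (j+1) * δ = h (((j:ℝ)+1)*δ) - h ((j:ℝ)*δ) := by
      have : hc h δ (j+1) = (h ((↑(j+1):ℝ)*δ) - h ((j:ℝ)*δ))/δ := by simp [hc]
      rw [this]
      push_cast
      field_simp
    rw [Finset.sum_range_succ, ih r]
    push_cast
    linear_combination key
end Approx2

section Approx3
variable {h : ℝ → ℝ} (hconv : ConvexOn ℝ (Set.Ici 0) h) (h0 : h 0 = 0) (hpos : ∀ t, 0 ≤ h t)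
  {δ : ℝ} (hδ : 0 < δ)

include hconv h0 hpos hδ in
lemma approxE_eq {r : ℝ} (hr : 0 ≤ r) :
    approxE h δ r = ENNReal.ofReal
      (hc h δ (⌊r/δ⌋₊) * (r - (⌊r/δ⌋₊:ℝ)*δ) + h ((⌊r/δ⌋₊:ℝ)*δ) - hc h δ (⌊r/δ⌋₊) * δ) := by
  set j := ⌊r/δ⌋₊ with hj
  have hjle : (j:ℝ)*δ ≤ r := (le_div_iff₀ hδ).1 (Nat.floor_le (div_nonneg hr hδ.le))
  have hjlt : r < ((j:ℝ)+1)*δ := by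
    have := (div_lt_iff₀ hδ).1 (Nat.lt_floor_add_one (r/δ))
    linarith
  have hmono' := hc_mono hconv h0 hpos hδ
  rw [approxE, tsum_eq_sum (s := Finset.range j) ?_]
  · have : ∀ k ∈ Finset.range j,
        ENNReal.ofReal (hc h δ (k+1) - hc h δ k) * ENNReal.ofReal (r - ((k:ℝ)+1)*δ)
          = ENNReal.ofReal ((hc h δ (k+1) - hc h δ k) * (r - ((k:ℝ)+1)*δ)) := by
      intro k hk
      rw [ENNReal.ofReal_mul (by linarith [hmono' k])]
    rw [Finset.sum_congr rfl this, ← ENNReal.ofReal_sum_of_nonneg, partial_sum_id h0 hδ j r]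
    intro k hk
    have hkj : (k:ℝ)+1 ≤ (j:ℝ) := by exact_mod_cast Finset.mem_range.1 hk
    have : ((k:ℝ)+1)*δ ≤ (j:ℝ)*δ := by nlinarith
    have := hmono' k
    nlinarith
  · intro k hk
    have hkj : (j:ℝ) ≤ (k:ℝ) := by
      exact_mod_cast le_of_not_gt (fun hc => hk (Finset.mem_range.2 hc))
    have : r - ((k:ℝ)+1)*δ ≤ 0 := by nlinarith
    rw [ENNReal.ofReal_eq_zero.2 this, mul_zero]

include hconv h0 hpos hδ in
lemma approxE_le {r : ℝ} (hr : 0 ≤ r) : approxE h δ r ≤ ENNReal.ofReal (h r) := by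
  rw [approxE_eq hconv h0 hpos hδ hr]
  apply ENNReal.ofReal_le_ofReal
  set j := ⌊r/δ⌋₊ with hj
  have hjle : (j:ℝ)*δ ≤ r := (le_div_iff₀ hδ).1 (Nat.floor_le (div_nonneg hr hδ.le))
  clear_value j
  cases j with
  | zero => simp [hc, h0]; exact hpos r
  | succ m =>
    have key : hc h δ (m+1) * δ = h ((↑(m+1):ℝ)*δ) - h ((m:ℝ)*δ) := by
      have : hc h δ (m+1) = (h ((↑(m+1):ℝ)*δ) - h ((m:ℝ)*δ))/δ := by simp [hc]
      rw [this]; field_simp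
    have hmδ : h ((↑(m+1):ℝ)*δ) - hc h δ (m+1) * δ = h ((m:ℝ)*δ) := by linarith
    have hcnn := hc_nonneg hconv h0 hpos hδ (m+1)
    have hm1 : (↑(m+1):ℝ)*δ ≤ r := by exact_mod_cast hjle
    have hmono' := h_mono hconv h0 hpos (by positivity : (0:ℝ) ≤ (m:ℝ)*δ)
      (by push_cast; nlinarith : (m:ℝ)*δ ≤ (↑(m+1):ℝ)*δ)
    rcases eq_or_lt_of_le hm1 with heq | hlt
    · rw [← heq]
      simp only [sub_self, mul_zero]
      linarith
    · -- slope comparison : hc (m+1) ≤ slope((m+1)δ, r)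
      have hx : ((m:ℝ))*δ ∈ Set.Ici (0:ℝ) := Set.mem_Ici.mpr (by positivity)
      have hz : r ∈ Set.Ici (0:ℝ) := Set.mem_Ici.mpr hr
      have hxy : (m:ℝ)*δ < (↑(m+1):ℝ)*δ := by push_cast; nlinarith
      have hsl := hconv.slope_mono_adjacent hx hz hxy hlt
      have e1 : (↑(m+1):ℝ)*δ - (m:ℝ)*δ = δ := by push_cast; ring
      rw [e1] at hsl
      have hcs : hc h δ (m+1) = (h ((↑(m+1):ℝ)*δ) - h ((m:ℝ)*δ))/δ := by simp [hc]
      rw [← hcs] at hsl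
      have hrs : 0 < r - (↑(m+1):ℝ)*δ := by linarith
      have hprod : hc h δ (m+1) * (r - (↑(m+1):ℝ)*δ) ≤ h r - h ((↑(m+1):ℝ)*δ) :=
        (le_div_iff₀ hrs).1 hsl
      nlinarith
end Approx3

section Approx4
variable {h : ℝ → ℝ} (hconv : ConvexOn ℝ (Set.Ici 0) h) (h0 : h 0 = 0) (hpos : ∀ t, 0 ≤ h t)
  {δ : ℝ} (hδ : 0 < δ)

include hconv h0 hpos hδ in
lemma le_approxE {r : ℝ} (hr : 0 ≤ r) :
    ENNReal.ofReal (h (max (r - 2*δ) 0)) ≤ approxE h δ r := by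
  rw [approxE_eq hconv h0 hpos hδ hr]
  apply ENNReal.ofReal_le_ofReal
  set j := ⌊r/δ⌋₊ with hj
  have hjle : (j:ℝ)*δ ≤ r := (le_div_iff₀ hδ).1 (Nat.floor_le (div_nonneg hr hδ.le))
  have hjlt : r < ((j:ℝ)+1)*δ := by
    have := (div_lt_iff₀ hδ).1 (Nat.lt_floor_add_one (r/δ))
    linarith
  clear_value j
  cases j with
  | zero =>
    simp only [Nat.cast_zero, zero_mul, sub_zero, hc, mul_zero, zero_mul]
    have : max (r - 2*δ) 0 = 0 := by
      apply max_eq_right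
      simp only [Nat.cast_zero, zero_add] at hjlt
      linarith
    rw [this, h0]
    simp [h0, hc]
  | succ m =>
    have key : hc h δ (m+1) * δ = h ((↑(m+1):ℝ)*δ) - h ((m:ℝ)*δ) := by
      have : hc h δ (m+1) = (h ((↑(m+1):ℝ)*δ) - h ((m:ℝ)*δ))/δ := by simp [hc]
      rw [this]; field_simp
    have hcnn := hc_nonneg hconv h0 hpos hδ (m+1)
    have hge : hc h δ (m+1) * (r - (↑(m+1):ℝ)*δ) ≥ 0 := by
      apply mul_nonneg hcnn
      have : (↑(m+1):ℝ)*δ ≤ r := by exact_mod_cast hjle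
      linarith
    have hmax : max (r - 2*δ) 0 ≤ (m:ℝ)*δ := by
      apply max_le _ (by positivity)
      have : r < ((↑(m+1):ℝ)+1)*δ := by exact_mod_cast hjlt
      push_cast at this ⊢
      nlinarith
    have hmm := h_mono hconv h0 hpos (le_max_right _ _) hmax
    push_cast at key hge ⊢
    linarith

include hconv h0 hpos in
lemma approxE_tendsto {r : ℝ} (hr : 0 ≤ r) :
    Filter.Tendsto (fun n : ℕ => approxE h ((n:ℝ)+1)⁻¹ r) atTop
      (𝓝 (ENNReal.ofReal (h r))) := by
  have hδ : ∀ n : ℕ, (0:ℝ) < ((n:ℝ)+1)⁻¹ := fun n => by positivity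
  have hupper : Filter.Tendsto (fun _ : ℕ => ENNReal.ofReal (h r)) atTop
      (𝓝 (ENNReal.ofReal (h r))) := tendsto_const_nhds
  have hlow : Filter.Tendsto (fun n : ℕ => ENNReal.ofReal (h (max (r - 2*((n:ℝ)+1)⁻¹) 0)))
      atTop (𝓝 (ENNReal.ofReal (h r))) := by
    rcases eq_or_lt_of_le hr with rfl | hr0
    · have hfun : (fun n : ℕ => ENNReal.ofReal (h (max ((0:ℝ) - 2*((n:ℝ)+1)⁻¹) 0)))
          = fun _ : ℕ => ENNReal.ofReal (h 0) := by
        funext n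
        congr 2
        apply max_eq_right
        have := hδ n
        linarith
      rw [hfun]
      exact tendsto_const_nhds
    · have hδ0 : Filter.Tendsto (fun n : ℕ => ((n:ℝ)+1)⁻¹) atTop (𝓝 0) := by
        exact tendsto_one_div_add_atTop_nhds_zero_nat.congr (fun n => by rw [one_div])
      have hx : Filter.Tendsto (fun n : ℕ => max (r - 2*((n:ℝ)+1)⁻¹) 0) atTop (𝓝 r) := by
        have h1 : Filter.Tendsto (fun n : ℕ => r - 2*((n:ℝ)+1)⁻¹) atTop (𝓝 (r - 2*0)) :=
          (tendsto_const_nhds.sub (hδ0.const_mul 2))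
        rw [mul_zero, sub_zero] at h1
        have h2 := h1.max (tendsto_const_nhds (x := (0:ℝ)))
        rwa [max_eq_left hr0.le] at h2
      have hcont : ContinuousAt h r := by
        have hcc : ContinuousOn h (Set.Ioi (0:ℝ)) :=
          (hconv.subset Set.Ioi_subset_Ici_self (convex_Ioi 0)).continuousOn isOpen_Ioi
        exact hcc.continuousAt (Ioi_mem_nhds hr0)
      exact (ENNReal.continuous_ofReal.tendsto _).comp (hcont.tendsto.comp hx)
  exact tendsto_of_tendsto_of_tendsto_of_le_of_le hlow hupper
    (fun n => le_approxE hconv h0 hpos (hδ n) hr)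
    (fun n => approxE_le hconv h0 hpos (hδ n) hr)
end Approx4
/-- one-dimensional optimal transport for convex costs. For `P₁`
with continuous strictly increasing CDF `F₁`, the monotone coupling `(X, F₂⁻¹(F₁(X)))`
minimizes `E[h(|X − Y|)]` over couplings of `(P₁, P₂)` for convex `h ≥ 0` with `h(0)=0`,
and the minimum equals `∫₀¹ h(|F₁⁻¹(u) − F₂⁻¹(u)|) du`. -/
theorem monotone_coupling_optimal (P₁ P₂ : Measure ℝ)
    [IsProbabilityMeasure P₁] [IsProbabilityMeasure P₂]
    (hm1 : Integrable (fun x => x) P₁) (hm2 : Integrable (fun x => x) P₂)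
    (hcont : Continuous (fun x => (cdf P₁ x : ℝ)))
    (hmono : StrictMono (fun x => (cdf P₁ x : ℝ)))
    (h : ℝ → ℝ) (hconv : ConvexOn ℝ (Set.Ici 0) h) (h0 : h 0 = 0) (hpos : ∀ t, 0 ≤ h t) :
    (∀ J : Measure (ℝ × ℝ), IsProbabilityMeasure J →
      J.map Prod.fst = P₁ → J.map Prod.snd = P₂ →
      ∫⁻ x, ENNReal.ofReal (h |x - qf P₂ (cdf P₁ x)|) ∂P₁ ≤
        ∫⁻ p, ENNReal.ofReal (h |p.1 - p.2|) ∂J) ∧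
    ∫⁻ x, ENNReal.ofReal (h |x - qf P₂ (cdf P₁ x)|) ∂P₁ =
      ∫⁻ u in Set.Ioo (0 : ℝ) 1, ENNReal.ofReal (h |qf P₁ u - qf P₂ u|) := by
  have hF₁meas : Measurable (fun x => (cdf P₁ x : ℝ)) := (monotone_cdf P₁).measurable
  have hmap : P₁.map (fun x => (cdf P₁ x : ℝ)) = volume.restrict (Ioo (0:ℝ) 1) :=
    map_cdf_eq_uniform P₁ hcont hmono
  set b : ℝ → ℝ := fun u => |qf P₁ u - qf P₂ u| with hbdef
  have hb : AEMeasurable b (volume.restrict (Ioo (0:ℝ) 1)) :=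
    continuous_abs.measurable.comp_aemeasurable
      ((aemeasurable_qf P₁).sub (aemeasurable_qf P₂))
  set G : ℝ → ℝ≥0∞ := fun u => ENNReal.ofReal (h |qf P₁ u - qf P₂ u|) with hGdef
  have hGliminf : ∀ u, G u
      = Filter.liminf (fun n : ℕ => approxE h ((n:ℝ)+1)⁻¹ (b u)) atTop := fun u =>
    ((approxE_tendsto hconv h0 hpos (abs_nonneg _)).liminf_eq).symm
  have hGmeas : AEMeasurable G (volume.restrict (Ioo (0:ℝ) 1)) := by
    have hfun : G = (fun r : ℝ => Filter.liminf (fun n : ℕ => approxE h ((n:ℝ)+1)⁻¹ r) atTop)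
        ∘ b := funext fun u => hGliminf u
    rw [hfun]
    exact (Measurable.liminf (fun n => measurable_approxE h _)).comp_aemeasurable hb
  -- part (ii)
  have hii : ∫⁻ x, ENNReal.ofReal (h |x - qf P₂ (cdf P₁ x)|) ∂P₁
      = ∫⁻ u in Set.Ioo (0 : ℝ) 1, ENNReal.ofReal (h |qf P₁ u - qf P₂ u|) := by
    have e1 : (fun x => ENNReal.ofReal (h |x - qf P₂ (cdf P₁ x)|))
        = fun x => G ((fun x => (cdf P₁ x : ℝ)) x) := by
      funext x
      simp only [hGdef]
      rw [qf_cdf P₁ hmono x]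
    rw [e1]
    have hG' : AEMeasurable G (P₁.map (fun x => (cdf P₁ x : ℝ))) := by rw [hmap]; exact hGmeas
    rw [← lintegral_map' hG' hF₁meas.aemeasurable, hmap]
  refine ⟨?_, hii⟩
  intro J hJprob hJ1 hJ2
  rw [hii]
  -- part (i)
  have hkey : ∀ n : ℕ, ∫⁻ u in Set.Ioo (0:ℝ) 1, approxE h ((n:ℝ)+1)⁻¹ (b u)
      ≤ ∫⁻ p, ENNReal.ofReal (h |p.1 - p.2|) ∂J := by
    intro n
    set δ : ℝ := ((n:ℝ)+1)⁻¹ with hδdef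
    have hδ : 0 < δ := by positivity
    have hterm : ∀ k : ℕ, AEMeasurable
        (fun u => ENNReal.ofReal (hc h δ (k+1) - hc h δ k) * ENNReal.ofReal (b u - ((k:ℝ)+1)*δ))
        (volume.restrict (Ioo (0:ℝ) 1)) := by
      intro k
      exact ((ENNReal.continuous_ofReal.measurable.comp
        (measurable_id.sub measurable_const)).comp_aemeasurable hb).const_mul _
    calc ∫⁻ u in Set.Ioo (0:ℝ) 1, approxE h δ (b u)
        = ∑' k : ℕ, ∫⁻ u in Set.Ioo (0:ℝ) 1,
            ENNReal.ofReal (hc h δ (k+1) - hc h δ k) * ENNReal.ofReal (b u - ((k:ℝ)+1)*δ) := by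
          rw [← lintegral_tsum hterm]; rfl
      _ = ∑' k : ℕ, ENNReal.ofReal (hc h δ (k+1) - hc h δ k)
            * ∫⁻ u in Set.Ioo (0:ℝ) 1, ENNReal.ofReal (b u - ((k:ℝ)+1)*δ) := by
          congr 1
          funext k
          exact lintegral_const_mul' _ _ ENNReal.ofReal_ne_top
      _ ≤ ∑' k : ℕ, ENNReal.ofReal (hc h δ (k+1) - hc h δ k)
            * ∫⁻ p, ENNReal.ofReal (|p.1 - p.2| - ((k:ℝ)+1)*δ) ∂J := by
          refine ENNReal.tsum_le_tsum (fun k => mul_le_mul_right ?_ _)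
          exact hinge_key P₁ P₂ J hJ1 hJ2 (by positivity)
      _ = ∫⁻ p, approxE h δ (|p.1 - p.2|) ∂J := by
          have hmk : ∀ k : ℕ, AEMeasurable (fun p : ℝ × ℝ =>
              ENNReal.ofReal (hc h δ (k+1) - hc h δ k)
                * ENNReal.ofReal (|p.1 - p.2| - ((k:ℝ)+1)*δ)) J := by
            intro k
            exact (((measurable_fst.sub measurable_snd).abs.sub
              measurable_const).ennreal_ofReal.const_mul _).aemeasurable
          calc ∑' k : ℕ, ENNReal.ofReal (hc h δ (k+1) - hc h δ k)
                * ∫⁻ p, ENNReal.ofReal (|p.1 - p.2| - ((k:ℝ)+1)*δ) ∂J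
              = ∑' k : ℕ, ∫⁻ p, ENNReal.ofReal (hc h δ (k+1) - hc h δ k)
                * ENNReal.ofReal (|p.1 - p.2| - ((k:ℝ)+1)*δ) ∂J := by
                congr 1
                funext k
                rw [lintegral_const_mul' _ _ ENNReal.ofReal_ne_top]
            _ = ∫⁻ p, ∑' k : ℕ, ENNReal.ofReal (hc h δ (k+1) - hc h δ k)
                * ENNReal.ofReal (|p.1 - p.2| - ((k:ℝ)+1)*δ) ∂J := (lintegral_tsum hmk).symm
            _ = ∫⁻ p, approxE h δ (|p.1 - p.2|) ∂J := rfl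
      _ ≤ ∫⁻ p, ENNReal.ofReal (h |p.1 - p.2|) ∂J :=
          lintegral_mono (fun p => approxE_le hconv h0 hpos hδ (abs_nonneg _))
  calc ∫⁻ u in Set.Ioo (0:ℝ) 1, G u
      = ∫⁻ u in Set.Ioo (0:ℝ) 1,
          Filter.liminf (fun n : ℕ => approxE h ((n:ℝ)+1)⁻¹ (b u)) atTop :=
        lintegral_congr (fun u => hGliminf u)
    _ ≤ Filter.liminf (fun n : ℕ => ∫⁻ u in Set.Ioo (0:ℝ) 1, approxE h ((n:ℝ)+1)⁻¹ (b u)) atTop :=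
        lintegral_liminf_le' (fun n => (measurable_approxE h _).comp_aemeasurable hb)
    _ ≤ Filter.liminf (fun _ : ℕ => ∫⁻ p, ENNReal.ofReal (h |p.1 - p.2|) ∂J) atTop :=
        Filter.liminf_le_liminf (Filter.Eventually.of_forall hkey)
    _ = ∫⁻ p, ENNReal.ofReal (h |p.1 - p.2|) ∂J := Filter.liminf_const _
end

section
/- Let Y be a real random variable, Γ > 1, γ⁺ its Γ/(1+Γ)-quantile with P[Y > γ⁺] = 1/(1+Γ), and suppose there exist constants b, C > 0 with P[|Y − γ⁺| ≤ t] ≤ C·t^b for all t ≥ 0. Then for any real γ̂, |(1/(1+Γ))(γ̂ − γ⁺) + E[(Y − γ̂)_+ − (Y − γ⁺)_+]| ≤ C·|γ̂ − γ⁺|^{1+b}. -/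
open MeasureTheory

lemma key_bound (y a c : ℝ) :
    |max (y - a) 0 - max (y - c) 0 + (if c < y then a - c else 0)| ≤ |a - c| := by
  rcases abs_cases (a - c) with ⟨h1, h2⟩ | ⟨h1, h2⟩ <;>
  rcases le_total y a with hy1 | hy1 <;>
  rcases le_total y c with hy2 | hy2 <;>
  simp [max_def] <;> split_ifs <;>
  rw [abs_le] <;> constructor <;> linarith

lemma key_zero (y a c : ℝ) (h : |a - c| < |y - c|) :
    max (y - a) 0 - max (y - c) 0 + (if c < y then a - c else 0) = 0 := by
  rcases abs_cases (a - c) with ⟨h1, h2⟩ | ⟨h1, h2⟩ <;>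
  rcases abs_cases (y - c) with ⟨g1, g2⟩ | ⟨g1, g2⟩ <;>
  rcases le_total y a with hy1 | hy1 <;>
  rcases le_total y c with hy2 | hy2 <;>
  simp [max_def] <;> split_ifs <;> linarith

/-- margin-condition bound for the CVaR-type functional. If `γ⁺` is the
`Γ/(1+Γ)`-quantile of `Y` with `P[Y > γ⁺] = 1/(1+Γ)` and `P[|Y − γ⁺| ≤ t] ≤ C t^b`, then
for any `γ̂`, `|(1/(1+Γ))(γ̂ − γ⁺) + E[(Y − γ̂)₊ − (Y − γ⁺)₊]| ≤ C |γ̂ − γ⁺|^{1+b}`. -/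
theorem cvar_margin_bound {Ω : Type*} [MeasurableSpace Ω]
    (μ : Measure Ω) [IsProbabilityMeasure μ]
    (Y : Ω → ℝ) (hY : Measurable Y) (Γ γp : ℝ) (hΓ : 1 < Γ)
    (hquant : (μ {ω | γp < Y ω}).toReal = 1 / (1 + Γ))
    (b C : ℝ) (hb : 0 < b) (hC : 0 < C)
    (hmargin : ∀ t : ℝ, 0 ≤ t → (μ {ω | |Y ω - γp| ≤ t}).toReal ≤ C * t ^ b)
    (γhat : ℝ) :
    |(1 / (1 + Γ)) * (γhat - γp) +
        ∫ ω, (max (Y ω - γhat) 0 - max (Y ω - γp) 0) ∂μ| ≤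
      C * |γhat - γp| ^ (1 + b) := by
  set δ := γhat - γp with hδ
  set A : Set Ω := {ω | γp < Y ω} with hA
  have hAmeas : MeasurableSet A := measurableSet_lt measurable_const hY
  set B : Set Ω := {ω | |Y ω - γp| ≤ |δ|} with hB
  have hBmeas : MeasurableSet B := measurableSet_le (hY.sub measurable_const).abs measurable_const
  set g : Ω → ℝ := fun ω => max (Y ω - γhat) 0 - max (Y ω - γp) 0 with hg
  have hgmeas : Measurable g :=
    ((hY.sub measurable_const).max measurable_const).sub
      ((hY.sub measurable_const).max measurable_const)
  have hgbd : ∀ ω, |g ω| ≤ |δ| := by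
    intro ω
    calc |g ω| ≤ |(Y ω - γhat) - (Y ω - γp)| := abs_max_sub_max_le_abs _ _ _
    _ = |δ| := by rw [abs_sub_comm, hδ]; ring_nf
  have hgint : Integrable g μ := by
    refine Integrable.mono' (integrable_const |δ|) hgmeas.aestronglyMeasurable ?_
    exact Filter.Eventually.of_forall fun ω => (hgbd ω).trans_eq (Real.norm_eq_abs _).symm.symm
  set F : Ω → ℝ := fun ω => g ω + A.indicator (fun _ => δ) ω with hF
  have hIint : Integrable (A.indicator (fun _ => δ)) μ := (integrable_const δ).indicator hAmeas
  have hFint : Integrable F μ := hgint.add hIint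
  have hint : ∫ ω, F ω ∂μ = (∫ ω, g ω ∂μ) + δ * (μ A).toReal := by
    rw [integral_add hgint hIint, integral_indicator_const _ hAmeas]
    simp [mul_comm, Measure.real]
  have hFeq : ∀ ω, F ω = max (Y ω - γhat) 0 - max (Y ω - γp) 0 +
      (if γp < Y ω then δ else 0) := by
    intro ω
    simp only [hF, hg, Set.indicator_apply, hA, Set.mem_setOf_eq]
  have key : |(1 / (1 + Γ)) * δ + ∫ ω, g ω ∂μ| ≤ |δ| * (μ B).toReal := by
    have : (1 / (1 + Γ)) * δ + ∫ ω, g ω ∂μ = ∫ ω, F ω ∂μ := by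
      rw [hint, ← hquant]; ring
    rw [this]
    calc |∫ ω, F ω ∂μ| = ‖∫ ω, F ω ∂μ‖ := (Real.norm_eq_abs _).symm
    _ ≤ ∫ ω, ‖F ω‖ ∂μ := norm_integral_le_integral_norm F
    _ = ∫ ω, |F ω| ∂μ := by simp [Real.norm_eq_abs]
    _ ≤ ∫ ω, B.indicator (fun _ => |δ|) ω ∂μ := by
        refine integral_mono hFint.abs ((integrable_const |δ|).indicator hBmeas) ?_
        intro ω
        show |F ω| ≤ B.indicator (fun _ => |δ|) ω
        by_cases hω : ω ∈ B
        · rw [Set.indicator_of_mem hω, hFeq]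
          exact key_bound _ _ _
        · rw [Set.indicator_of_notMem hω, hFeq]
          have : |δ| < |Y ω - γp| := lt_of_not_ge hω
          rw [key_zero _ _ _ this, abs_zero]
    _ = |δ| * (μ B).toReal := by
        rw [integral_indicator_const _ hBmeas]; simp [mul_comm, Measure.real]
  refine key.trans ?_
  have hmB : (μ B).toReal ≤ C * |δ| ^ b := hmargin |δ| (abs_nonneg _)
  calc |δ| * (μ B).toReal ≤ |δ| * (C * |δ| ^ b) := by
        exact mul_le_mul_of_nonneg_left hmB (abs_nonneg _)
  _ = C * |δ| ^ (1 + b) := by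
      rcases eq_or_ne δ 0 with h0 | h0
      · simp [h0, Real.zero_rpow (by positivity : (1 : ℝ) + b ≠ 0)]
      · rw [Real.rpow_add (abs_pos.mpr h0), Real.rpow_one]; ring
end
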